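/- Let U, V, A, B be random variables with values in [−1, 1] satisfying U = (V + A·T)/(1 + B·T) where T = tanh(βJ), β > 0 is a constant, and J is a random variable with density (α/(2N))·1_{|x| ≥ N^(−1/α)}/|x|^(α+1) for parameters 1 < α < 2 and N ≥ 1. Then |U − V| ≤ 2|T|/(1 − |T|) pointwise, and E|U − V|² → 0 as N → ∞. -/

import Mathlib

open MeasureTheory Filter Topology

/-- Law of the Lévy disorder `J`: density `(α/(2N)) 1_{|x| ≥ N^{-1/α}} / |x|^{α+1}`
with respect to Lebesgue measure. -/
noncomputable def levyLaw (α : ℝ) (N : ℕ) : Measure ℝ :=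
  volume.withDensity fun x =>
    ENNReal.ofReal (if (N : ℝ) ^ (-(1 : ℝ) / α) ≤ |x|
      then α / (2 * N) / |x| ^ (α + 1) else 0)

/-!
Writing `T = tanh (βJ)`, the update gives `U - V = (A - VB) T / (1 + BT)` with
`|A - VB| ≤ 2` and `1 + BT ≥ 1 - |T|`. Together with `|U - V| ≤ 2` this yields
`(U - V)² ≤ 8 |T| ≤ 8β |J|`, and since `α > 1` the Lévy law has the finite first moment
`E|J| = α/(α-1) · N^{-1/α}`, which tends to `0`.
-/

open Set
open scoped ENNReal

namespace Real

theorem monotone_sub_tanh : Monotone fun x => x - tanh x := by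
  have hderiv (x : ℝ) : HasDerivAt (fun x => x - tanh x)
      (1 - (cosh x * cosh x - sinh x * sinh x) / cosh x ^ 2) x := by
    simp only [tanh_eq_sinh_div_cosh]
    exact (hasDerivAt_id x).sub ((hasDerivAt_sinh x).div (hasDerivAt_cosh x) (cosh_pos x).ne')
  refine monotone_of_hasDerivAt_nonneg hderiv fun x => ?_
  rw [← sq, ← sq, cosh_sq_sub_sinh_sq]
  show (0 : ℝ) ≤ 1 - 1 / cosh x ^ 2
  rw [sub_nonneg]
  exact div_le_one_of_le₀ (one_le_pow₀ (one_le_cosh x)) (by positivity)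

theorem tanh_le_self {x : ℝ} (hx : 0 ≤ x) : tanh x ≤ x := by
  simpa using monotone_sub_tanh hx

theorem tanh_nonneg {x : ℝ} (hx : 0 ≤ x) : 0 ≤ tanh x := by
  rw [tanh_eq_sinh_div_cosh]
  exact div_nonneg (sinh_nonneg_iff.2 hx) (cosh_pos x).le

theorem abs_tanh_le_abs (x : ℝ) : |tanh x| ≤ |x| := by
  rcases le_total 0 x with hx | hx
  · rw [abs_of_nonneg (tanh_nonneg hx), abs_of_nonneg hx]
    exact tanh_le_self hx
  · rw [← abs_neg, ← tanh_neg, abs_of_nonneg (tanh_nonneg (neg_nonneg.2 hx)), abs_of_nonpos hx]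
    exact tanh_le_self (neg_nonneg.2 hx)

end Real

theorem abs_sub_le_of_eq_div {u v a b t : ℝ} (hv : |v| ≤ 1) (ha : |a| ≤ 1) (hb : |b| ≤ 1)
    (ht : |t| < 1) (heq : u = (v + a * t) / (1 + b * t)) :
    |u - v| ≤ 2 * |t| / (1 - |t|) := by
  have hbt : |b * t| ≤ |t| := by
    rw [abs_mul]
    exact mul_le_of_le_one_left (abs_nonneg t) hb
  have hden : 1 - |t| ≤ 1 + b * t := by linarith [neg_abs_le (b * t)]
  have hnum : |a - v * b| ≤ 2 := by
    calc |a - v * b| ≤ |a| + |v| * |b| := by rw [← abs_mul]; exact abs_sub _ _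
      _ ≤ 2 := by nlinarith [abs_nonneg v, abs_nonneg b]
  have hdiff : u - v = (a - v * b) * t / (1 + b * t) := by
    rw [heq, div_sub' (by linarith)]
    ring_nf
  rw [hdiff, abs_div, abs_mul, abs_of_pos (by linarith : 0 < 1 + b * t)]
  exact div_le_div₀ (by positivity) (mul_le_mul_of_nonneg_right hnum (abs_nonneg t))
    (by linarith) hden

theorem sq_sub_le_of_eq_div {u v a b t : ℝ} (hu : |u| ≤ 1) (hv : |v| ≤ 1) (ha : |a| ≤ 1)
    (hb : |b| ≤ 1) (ht : |t| < 1) (heq : u = (v + a * t) / (1 + b * t)) :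
    (u - v) ^ 2 ≤ 8 * |t| := by
  have hdiff := abs_sub_le_of_eq_div hv ha hb ht heq
  have htwo : |u - v| ≤ 2 := (abs_sub u v).trans (by linarith)
  rw [le_div_iff₀ (by linarith)] at hdiff
  have hfour : |u - v| ≤ 4 * |t| := by nlinarith [abs_nonneg t]
  calc (u - v) ^ 2 = |u - v| * |u - v| := by rw [abs_mul_abs_self, sq]
    _ ≤ 2 * (4 * |t|) := mul_le_mul htwo hfour (abs_nonneg _) zero_le_two
    _ = 8 * |t| := by ring

theorem integral_le_of_lintegral_ofReal_le {X : Type*} [MeasurableSpace X] {μ : Measure X}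
    {f : X → ℝ} {c : ℝ} (hf : ∀ x, 0 ≤ f x) (hc : 0 ≤ c)
    (h : ∫⁻ x, ENNReal.ofReal (f x) ∂μ ≤ ENNReal.ofReal c) : ∫ x, f x ∂μ ≤ c := by
  have h' : ‖∫ x, f x ∂μ‖ₑ ≤ ENNReal.ofReal c := by
    refine (enorm_integral_le_lintegral_enorm f).trans ?_
    simpa only [Real.enorm_eq_ofReal (hf _)] using h
  rwa [Real.enorm_eq_ofReal (integral_nonneg hf), ENNReal.ofReal_le_ofReal_iff hc] at h'

theorem lintegral_indicator_Ici_abs {ε : ℝ} (hε : 0 < ε) {f : ℝ → ℝ≥0∞}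
    (hf : Measurable f) :
    ∫⁻ x, (Ici ε).indicator f |x| = 2 * ∫⁻ x in Ici ε, f x := by
  have hsplit (x : ℝ) :
      (Ici ε).indicator f |x| = (Ici ε).indicator f x + (Ici ε).indicator f (-x) := by
    rcases le_total 0 x with hx | hx
    · rw [abs_of_nonneg hx, indicator_of_notMem (s := Ici ε) (a := -x) (by simp; linarith),
        add_zero]
    · rw [abs_of_nonpos hx, indicator_of_notMem (s := Ici ε) (a := x) (by simp; linarith),
        zero_add]
  rw [lintegral_congr hsplit, lintegral_add_left (hf.indicator measurableSet_Ici),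
    lintegral_neg_eq_self, ← two_mul, lintegral_indicator measurableSet_Ici]

theorem lintegral_Ici_rpow_of_lt {α ε : ℝ} (hα : 1 < α) (hε : 0 < ε) :
    ∫⁻ x in Ici ε, ENNReal.ofReal (x ^ (-α)) = ENNReal.ofReal (ε ^ (1 - α) / (α - 1)) := by
  have hint : IntegrableOn (fun x : ℝ => x ^ (-α)) (Ici ε) :=
    (integrableOn_Ioi_rpow_of_lt (by linarith) hε).congr_set_ae Ioi_ae_eq_Ici.symm
  have hnonneg : 0 ≤ᵐ[volume.restrict (Ici ε)] fun x : ℝ => x ^ (-α) :=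
    ae_restrict_of_forall_mem measurableSet_Ici fun x hx => Real.rpow_nonneg (hε.le.trans hx) _
  rw [← ofReal_integral_eq_lintegral_ofReal hint hnonneg, integral_Ici_eq_integral_Ioi,
    integral_Ioi_rpow_of_lt (by linarith) hε]
  congr 1
  rw [show -α + 1 = 1 - α by ring, neg_div, ← div_neg, neg_sub]

theorem lintegral_abs_levyLaw {α : ℝ} (hα : 1 < α) {N : ℕ} (hN : 1 ≤ N) :
    ∫⁻ x, ENNReal.ofReal |x| ∂levyLaw α N
      = ENNReal.ofReal (α / (α - 1) * (N : ℝ) ^ (-(1 : ℝ) / α)) := by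
  have hNpos : (0 : ℝ) < N := by exact_mod_cast hN
  set ε : ℝ := (N : ℝ) ^ (-(1 : ℝ) / α) with hεdef
  have hε : 0 < ε := Real.rpow_pos_of_pos hNpos _
  have hc : 0 ≤ α / (2 * N) := by positivity
  have hintegrand (x : ℝ) :
      ENNReal.ofReal (if ε ≤ |x| then α / (2 * N) / |x| ^ (α + 1) else 0) * ENNReal.ofReal |x|
        = ENNReal.ofReal (α / (2 * N))
          * (Ici ε).indicator (fun r => ENNReal.ofReal (r ^ (-α))) |x| := by
    by_cases hx : ε ≤ |x|
    · have hx0 : 0 < |x| := hε.trans_le hx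
      rw [if_pos hx, indicator_of_mem (mem_Ici.2 hx), ← ENNReal.ofReal_mul (by positivity),
        ← ENNReal.ofReal_mul hc, Real.rpow_add_one hx0.ne', Real.rpow_neg hx0.le]
      congr 1
      field_simp
    · rw [if_neg hx, indicator_of_notMem (mt mem_Ici.1 hx)]; simp
  have hrpow : Measurable fun r : ℝ => ENNReal.ofReal (r ^ (-α)) := by fun_prop
  rw [levyLaw, lintegral_withDensity_eq_lintegral_mul _
    (Measurable.ennreal_ofReal (Measurable.ite (measurableSet_le measurable_const measurable_abs)
      (by fun_prop) measurable_const)) (by fun_prop)]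
  refine (lintegral_congr hintegrand).trans ?_
  rw [lintegral_const_mul' _ _ ENNReal.ofReal_ne_top,
    lintegral_indicator_Ici_abs hε hrpow, lintegral_Ici_rpow_of_lt hα hε]
  have hpow : ε ^ (1 - α) = N * ε := by
    rw [hεdef, ← Real.rpow_mul hNpos.le,
      show -1 / α * (1 - α) = 1 + -1 / α by field_simp; ring, Real.rpow_add hNpos, Real.rpow_one]
  rw [← ENNReal.ofReal_ofNat 2, ← ENNReal.ofReal_mul zero_le_two, ← ENNReal.ofReal_mul hc,
    hpow]
  congr 1
  field_simp

theorem integral_sq_sub_le_of_map_eq_levyLaw {Ω : Type*} [MeasurableSpace Ω] {μ : Measure Ω}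
    {α β : ℝ} (hα : 1 < α) (hβ : 0 < β) {N : ℕ} (hN : 1 ≤ N) {u v a b j : Ω → ℝ}
    (hj : Measurable j) (hu : ∀ ω, |u ω| ≤ 1) (hv : ∀ ω, |v ω| ≤ 1) (ha : ∀ ω, |a ω| ≤ 1)
    (hb : ∀ ω, |b ω| ≤ 1) (hlaw : μ.map j = levyLaw α N)
    (heq : ∀ ω, u ω = (v ω + a ω * Real.tanh (β * j ω)) / (1 + b ω * Real.tanh (β * j ω))) :
    ∫ ω, (u ω - v ω) ^ 2 ∂μ ≤ 8 * β * (α / (α - 1)) * (N : ℝ) ^ (-(1 : ℝ) / α) := by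
  have hsq (ω : Ω) : (u ω - v ω) ^ 2 ≤ 8 * β * |j ω| := by
    refine (sq_sub_le_of_eq_div (hu ω) (hv ω) (ha ω) (hb ω) (Real.abs_tanh_lt_one _)
      (heq ω)).trans ?_
    have htanh := Real.abs_tanh_le_abs (β * j ω)
    rw [abs_mul, abs_of_pos hβ] at htanh
    linarith
  have hα1 : 0 < α - 1 := by linarith
  refine integral_le_of_lintegral_ofReal_le (fun ω => sq_nonneg _) (by positivity) ?_
  calc ∫⁻ ω, ENNReal.ofReal ((u ω - v ω) ^ 2) ∂μ
      ≤ ∫⁻ ω, ENNReal.ofReal (8 * β) * ENNReal.ofReal |j ω| ∂μ :=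
        lintegral_mono fun ω => by
          rw [← ENNReal.ofReal_mul (by positivity)]
          exact ENNReal.ofReal_le_ofReal (hsq ω)
    _ = ENNReal.ofReal (8 * β * (α / (α - 1)) * (N : ℝ) ^ (-(1 : ℝ) / α)) := by
        rw [lintegral_const_mul' _ _ ENNReal.ofReal_ne_top,
          ← lintegral_map (f := fun x => ENNReal.ofReal |x|) (by fun_prop) hj, hlaw,
          lintegral_abs_levyLaw hα hN, ← ENNReal.ofReal_mul (by positivity)]
        ring_nf

theorem tendsto_const_mul_natCast_rpow_neg_one_div {α : ℝ} (hα : 0 < α) (c : ℝ) :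
    Tendsto (fun N : ℕ => c * (N : ℝ) ^ (-(1 : ℝ) / α)) atTop (𝓝 0) := by
  have h := ((tendsto_rpow_neg_atTop (one_div_pos.2 hα)).comp
    tendsto_natCast_atTop_atTop).const_mul c
  simpa only [mul_zero, Function.comp_def, neg_div] using h

theorem cavity_L2_vanishing_general {Ω : Type*} [MeasurableSpace Ω] (μ : Measure Ω)
    (α β : ℝ) (hα : 1 < α) (hβ : 0 < β)
    (U V A B J : ℕ → Ω → ℝ)
    (hJm : ∀ N, Measurable (J N))
    (hUb : ∀ N ω, |U N ω| ≤ 1) (hVb : ∀ N ω, |V N ω| ≤ 1)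
    (hAb : ∀ N ω, |A N ω| ≤ 1) (hBb : ∀ N ω, |B N ω| ≤ 1)
    (hlaw : ∀ N : ℕ, 1 ≤ N → μ.map (J N) = levyLaw α N)
    (heq : ∀ N ω, U N ω
      = (V N ω + A N ω * Real.tanh (β * J N ω)) / (1 + B N ω * Real.tanh (β * J N ω))) :
    (∀ N ω, |U N ω - V N ω|
        ≤ 2 * |Real.tanh (β * J N ω)| / (1 - |Real.tanh (β * J N ω)|)) ∧
    Tendsto (fun N : ℕ => ∫ ω, (U N ω - V N ω) ^ 2 ∂μ) atTop (𝓝 0) := by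
  refine ⟨fun N ω => abs_sub_le_of_eq_div (hVb N ω) (hAb N ω) (hBb N ω)
    (Real.abs_tanh_lt_one _) (heq N ω), ?_⟩
  refine tendsto_of_tendsto_of_tendsto_of_le_of_le' tendsto_const_nhds
    (tendsto_const_mul_natCast_rpow_neg_one_div (by linarith : 0 < α) (8 * β * (α / (α - 1))))
    (Eventually.of_forall fun N => integral_nonneg fun ω => sq_nonneg _) ?_
  filter_upwards [eventually_ge_atTop 1] with N hN
  exact integral_sq_sub_le_of_map_eq_levyLaw hα hβ hN (hJm N) (hUb N) (hVb N) (hAb N) (hBb N)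
    (hlaw N hN) (heq N)

theorem cavity_L2_vanishing {Ω : Type*} [MeasurableSpace Ω] (μ : Measure Ω)
    [IsProbabilityMeasure μ] (α β : ℝ) (hα : 1 < α) (hα2 : α < 2) (hβ : 0 < β)
    (U V A B J : ℕ → Ω → ℝ)
    (hUm : ∀ N, Measurable (U N)) (hVm : ∀ N, Measurable (V N))
    (hAm : ∀ N, Measurable (A N)) (hBm : ∀ N, Measurable (B N))
    (hJm : ∀ N, Measurable (J N))
    (hUb : ∀ N ω, |U N ω| ≤ 1) (hVb : ∀ N ω, |V N ω| ≤ 1)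
    (hAb : ∀ N ω, |A N ω| ≤ 1) (hBb : ∀ N ω, |B N ω| ≤ 1)
    (hlaw : ∀ N : ℕ, 1 ≤ N → μ.map (J N) = levyLaw α N)
    (heq : ∀ N ω, U N ω
      = (V N ω + A N ω * Real.tanh (β * J N ω)) / (1 + B N ω * Real.tanh (β * J N ω))) :
    (∀ N ω, |U N ω - V N ω|
        ≤ 2 * |Real.tanh (β * J N ω)| / (1 - |Real.tanh (β * J N ω)|)) ∧
    Tendsto (fun N : ℕ => ∫ ω, (U N ω - V N ω) ^ 2 ∂μ) atTop (𝓝 0) :=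
  cavity_L2_vanishing_general μ α β hα hβ U V A B J hJm hUb hVb hAb hBb hlaw heq
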